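/- Let Gt = (V, E, {f_v}) be a general threshold instance whose underlying graph G = (V, E) is a directed acyclic graph (DAG). If f_v is AD-k for every node v ∈ V (Gt is locally AD-k), then the spread function σ is AD-k (Gt is globally AD-k). -/

import Mathlib

open MeasureTheory Finset
open scoped Classical

noncomputable section

/-- The difference of a set function `f` over a set `A`, evaluated at `S`:
`Δ_A f(S) = ∑_{B ⊆ A} (-1)^{|B|} f(S ∪ (A \ B))`. -/
def adDiff {V : Type*} [DecidableEq V] (f : Finset V → ℝ) (A S : Finset V) : ℝ :=
  ∑ B ∈ A.powerset, (-1 : ℝ) ^ B.card * f (S ∪ (A \ B))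

/-- A set function `f : 2^V → ℝ` is AD-`k` if `(-1)^{|A|+1} Δ_A f(S) ≥ 0` for every
nonempty `A` with `|A| ≤ k` and every `S`. -/
def IsADk {V : Type*} [DecidableEq V] (f : Finset V → ℝ) (k : ℕ) : Prop :=
  ∀ A S : Finset V, A.Nonempty → A.card ≤ k →
    0 ≤ (-1 : ℝ) ^ (A.card + 1) * adDiff f A S

/-- A general threshold instance on a finite directed graph `(V, E)`:
each node `v` has a threshold function `f v : 2^V → [0,1]` that is monotone,
vanishes on `∅`, and depends only on the in-neighbors of `v`. -/
structure GTInstance (V : Type*) [Fintype V] [DecidableEq V] where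
  E : V → V → Prop
  f : V → Finset V → ℝ
  f_nonneg : ∀ v S, 0 ≤ f v S
  f_le_one : ∀ v S, f v S ≤ 1
  f_mono : ∀ v, Monotone (f v)
  f_empty : ∀ v, f v ∅ = 0
  f_local : ∀ v S, f v S = f v (S.filter fun u => E u v)

variable {V : Type*} [Fintype V] [DecidableEq V]

/-- The deterministic cascade for threshold vector `θ` and seed set `S`:
`C_0 = S`, `C_{t+1} = C_t ∪ {v : f_v(C_t) ≥ θ_v}`. -/
def cascade (gt : GTInstance V) (θ : V → ℝ) (S : Finset V) : ℕ → Finset V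
  | 0 => S
  | t + 1 =>
      cascade gt θ S t ∪ Finset.univ.filter fun v => θ v ≤ gt.f v (cascade gt θ S t)

/-- The final active set of the cascade. -/
def finalSet (gt : GTInstance V) (θ : V → ℝ) (S : Finset V) : Finset V :=
  cascade gt θ S (Fintype.card V)

/-- The uniform (Lebesgue product) probability measure on `[0,1]^V`. -/
def cubeMeasure (V : Type*) [Fintype V] : Measure (V → ℝ) :=
  Measure.pi fun _ => volume.restrict (Set.Icc 0 1)

/-- `activationProb gt v S` is the probability (over uniform thresholds) that `v`
is active at the end of the diffusion started from seed set `S`. -/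
def activationProb (gt : GTInstance V) (v : V) (S : Finset V) : ℝ :=
  (cubeMeasure V {θ | v ∈ finalSet gt θ S}).toReal

/-- The spread function `σ(S) = ∑_{v ∈ V} P_v(S)`. -/
def spread (gt : GTInstance V) (S : Finset V) : ℝ :=
  ∑ v : V, activationProb gt v S

/-- The underlying graph is a layered graph with `m ≥ 2` layers (layer indices `1, …, m`),
all edges going from a node of layer `i+1` to a node of layer `i`. -/
def IsLayered (gt : GTInstance V) (m : ℕ) (layer : V → ℕ) : Prop :=
  2 ≤ m ∧ (∀ v, 1 ≤ layer v ∧ layer v ≤ m) ∧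
    ∀ u v, gt.E u v → layer u = layer v + 1

/-- The underlying graph is a directed acyclic graph (no directed cycles). -/
def IsDAG (gt : GTInstance V) : Prop := ∀ v, ¬ Relation.TransGen gt.E v v

/-!
Write `E F S` for the expected value of `F` on the final active set seeded with `S`. Since
`σ = ∑ v, E 1[v ∈ ·]` and indicators are AD-`k`, it suffices that `E` maps AD-`j` set functions
to AD-`j` set functions for `j ≤ k`. We induct on the number of nodes with a nonzero threshold
function. As the graph is acyclic, one of them, `t`, has no edge to any other; mute it (`f t := 0`)
and let `E'` be the expectation of the muted instance. Nobody listens to `t`, so a seeded `t` only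
adds itself to the muted final set, and an unseeded `t` joins the muted final set `Y` at the end
iff `θ t ≤ f t Y`, an event of conditional probability `f t Y` because `Y` does not depend on
`θ t`. Hence `E F (S ∪ {t}) = E' (F (· ∪ {t})) S`, and `E F S = E' (H F) S` for `t ∉ S`, where
`H F T = (1 - f t T) F T + f t T F (T ∪ {t})`. The Leibniz rule for differences shows that `H`
preserves AD-`j`. A difference in the direction `t` becomes `E'` applied to
`(1 - f t) * (F (· ∪ {t}) - F)`, which is completely monotone up to order `j - 1`, i.e.
nonnegative with AD-`(j - 1)` negation, so the induction hypothesis applies to it as well.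
-/

theorem Finset.chain_succ_card_eq {α : Type*} [Fintype α] {C : ℕ → Finset α} (hC : Monotone C)
    (hstall : ∀ s, C (s + 1) = C s → C (s + 2) = C (s + 1)) :
    C (Fintype.card α + 1) = C (Fintype.card α) := by
  have hgrow : ∀ s, C (s + 1) ≠ C s → (C s).card < (C (s + 1)).card := fun s h =>
    Finset.card_lt_card ((hC s.le_succ).ssubset_of_ne h.symm)
  have key : ∀ s, C (s + 1) = C s ∨ s + 1 ≤ (C (s + 1)).card := by
    intro s
    induction s with
    | zero => exact (eq_or_ne _ _).imp_right fun h => Nat.one_le_of_lt (hgrow 0 h)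
    | succ s ih =>
      refine (eq_or_ne (C (s + 2)) (C (s + 1))).imp_right fun h => ?_
      rcases ih with ih | ih
      · exact absurd (hstall s ih) h
      · exact (Nat.succ_le_succ ih).trans (hgrow _ h)
  exact (key _).resolve_right fun h => by
    have := Finset.card_le_univ (C (Fintype.card α + 1))
    omega

theorem Finset.exists_forall_not_rel {α : Type*} [Finite α] {r : α → α → Prop}
    (hr : ∀ a, ¬ Relation.TransGen r a a) {s : Finset α} (hs : s.Nonempty) :
    ∃ a ∈ s, ∀ b ∈ s, ¬ r a b := by
  have : IsTrans α fun a b => Relation.TransGen r b a := ⟨fun _ _ _ hab hbc => hbc.trans hab⟩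
  have : Std.Irrefl fun a b : α => Relation.TransGen r b a := ⟨hr⟩
  obtain ⟨a, ha, hmin⟩ := (Finite.wellFounded_of_trans_of_irrefl
    fun a b => Relation.TransGen r b a).has_min (s : Set α) hs
  exact ⟨a, ha, fun b hb hab => hmin b hb (.single hab)⟩

section SetFunction

variable {α : Type*} [DecidableEq α]

theorem adDiff_empty (f : Finset α → ℝ) (S : Finset α) : adDiff f ∅ S = f S := by
  simp [adDiff]

theorem adDiff_comp_insert (f : Finset α → ℝ) (x : α) (A S : Finset α) :
    adDiff (fun T => f (insert x T)) A S = adDiff f A (insert x S) := by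
  simp only [adDiff, Finset.insert_union]

theorem adDiff_insert (f : Finset α → ℝ) {x : α} {A : Finset α} (hx : x ∉ A) (S : Finset α) :
    adDiff f (insert x A) S = adDiff f A (insert x S) - adDiff f A S := by
  rw [adDiff, Finset.sum_powerset_insert hx, adDiff, adDiff, ← Finset.sum_sub_distrib,
    ← Finset.sum_add_distrib]
  refine Finset.sum_congr rfl fun B hB => ?_
  have hxB : x ∉ B := fun h => hx (Finset.mem_powerset.1 hB h)
  rw [Finset.insert_sdiff_of_notMem _ hxB, Finset.insert_sdiff_insert,
    Finset.sdiff_insert_of_notMem hx, Finset.card_insert_of_notMem hxB, Finset.union_insert,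
    Finset.insert_union, pow_succ]
  ring

theorem adDiff_add (f g : Finset α → ℝ) (A S : Finset α) :
    adDiff (fun T => f T + g T) A S = adDiff f A S + adDiff g A S := by
  simp only [adDiff, mul_add, Finset.sum_add_distrib]

theorem adDiff_sub (f g : Finset α → ℝ) (A S : Finset α) :
    adDiff (fun T => f T - g T) A S = adDiff f A S - adDiff g A S := by
  simp only [adDiff, mul_sub, Finset.sum_sub_distrib]

theorem adDiff_neg (f : Finset α → ℝ) (A S : Finset α) :
    adDiff (fun T => -f T) A S = -adDiff f A S := by
  simp only [adDiff, mul_neg, Finset.sum_neg_distrib]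

theorem adDiff_sum {ι : Type*} (s : Finset ι) (f : ι → Finset α → ℝ) (A S : Finset α) :
    adDiff (fun T => ∑ i ∈ s, f i T) A S = ∑ i ∈ s, adDiff (f i) A S := by
  simp only [adDiff, Finset.mul_sum]
  exact Finset.sum_comm

theorem adDiff_const (c : ℝ) {A : Finset α} (hA : A.Nonempty) (S : Finset α) :
    adDiff (fun _ => c) A S = 0 := by
  obtain ⟨x, hx⟩ := hA
  rw [← Finset.insert_erase hx, adDiff_insert _ (Finset.notMem_erase x A), ← adDiff_comp_insert,
    sub_self]

theorem adDiff_congr_of_notMem {f g : Finset α → ℝ} {x : α} (h : ∀ T, x ∉ T → f T = g T)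
    {A S : Finset α} (hA : x ∉ A) (hS : x ∉ S) : adDiff f A S = adDiff g A S := by
  refine Finset.sum_congr rfl fun B _ => ?_
  rw [h]
  simp only [Finset.mem_union, Finset.mem_sdiff]
  tauto

theorem adDiff_mul (f g : Finset α → ℝ) (A S : Finset α) :
    adDiff (fun T => f T * g T) A S
      = ∑ B ∈ A.powerset, adDiff f B (S ∪ (A \ B)) * adDiff g (A \ B) S := by
  induction A using Finset.induction_on generalizing f g S with
  | empty => simp [adDiff]
  | insert x A hx ih =>
    rw [adDiff_insert _ hx, ← adDiff_comp_insert, ih, ih, Finset.sum_powerset_insert hx,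
      ← Finset.sum_sub_distrib, ← Finset.sum_add_distrib]
    refine Finset.sum_congr rfl fun B hB => ?_
    have hxB : x ∉ B := fun h => hx (Finset.mem_powerset.1 hB h)
    have hxAB : x ∉ A \ B := fun h => hx (Finset.mem_sdiff.1 h).1
    rw [Finset.insert_sdiff_of_notMem _ hxB, Finset.insert_sdiff_insert,
      Finset.sdiff_insert_of_notMem hx, adDiff_insert f hxB, adDiff_insert g hxAB,
      adDiff_comp_insert, adDiff_comp_insert, Finset.union_insert]
    ring

def Ignores (f : Finset α → ℝ) (x : α) : Prop := ∀ T, f (insert x T) = f T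

theorem Ignores.erase {f : Finset α → ℝ} {x : α} (h : Ignores f x) (T : Finset α) :
    f (T.erase x) = f T := by
  by_cases hx : x ∈ T
  · rw [← h, Finset.insert_erase hx]
  · rw [Finset.erase_eq_of_notMem hx]

theorem Ignores.adDiff_eq {f : Finset α → ℝ} {x : α} (h : Ignores f x) (A S : Finset α) :
    adDiff f A S = if x ∈ A then 0 else adDiff f A (S.erase x) := by
  have hf : (fun T => f (insert x T)) = f := funext h
  split_ifs with hA
  · rw [← Finset.insert_erase hA, adDiff_insert _ (Finset.notMem_erase x A), ← adDiff_comp_insert,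
      hf, sub_self]
  · by_cases hS : x ∈ S
    · conv_lhs => rw [← Finset.insert_erase hS, ← adDiff_comp_insert, hf]
    · rw [Finset.erase_eq_of_notMem hS]

/-- Complete monotonicity up to order `j`. -/
def IsCMk (f : Finset α → ℝ) (j : ℕ) : Prop :=
  ∀ A S : Finset α, A.card ≤ j → 0 ≤ (-1 : ℝ) ^ A.card * adDiff f A S

theorem isCMk_iff {f : Finset α → ℝ} {j : ℕ} :
    IsCMk f j ↔ (∀ S, 0 ≤ f S) ∧ IsADk (fun T => -f T) j := by
  have hsign : ∀ A S, (-1 : ℝ) ^ (A.card + 1) * adDiff (fun T => -f T) A S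
      = (-1) ^ A.card * adDiff f A S := fun A S => by rw [adDiff_neg, pow_succ]; ring
  refine ⟨fun h => ⟨fun S => by simpa [adDiff_empty] using h ∅ S (Nat.zero_le j),
    fun A S _ hA => (hsign A S).symm ▸ h A S hA⟩, fun ⟨h0, h⟩ A S hA => ?_⟩
  rcases A.eq_empty_or_nonempty with rfl | hne
  · simpa [adDiff_empty] using h0 S
  · exact hsign A S ▸ h A S hne hA

theorem IsCMk.mono {f : Finset α → ℝ} {i j : ℕ} (hf : IsCMk f j) (hij : i ≤ j) : IsCMk f i :=
  fun A S hA => hf A S (hA.trans hij)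

theorem IsCMk.mul {f g : Finset α → ℝ} {j : ℕ} (hf : IsCMk f j) (hg : IsCMk g j) :
    IsCMk (fun T => f T * g T) j := by
  intro A S hA
  rw [adDiff_mul, Finset.mul_sum]
  refine Finset.sum_nonneg fun B hB => ?_
  have hBA := Finset.mem_powerset.1 hB
  have hsign : (-1 : ℝ) ^ A.card = (-1) ^ B.card * (-1) ^ (A \ B).card := by
    rw [← pow_add, add_comm, Finset.card_sdiff_add_card_eq_card hBA]
  calc (0 : ℝ)
        ≤ ((-1) ^ B.card * adDiff f B (S ∪ (A \ B))) * ((-1) ^ (A \ B).card * adDiff g (A \ B) S) :=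
        mul_nonneg (hf _ _ ((Finset.card_le_card hBA).trans hA))
          (hg _ _ ((Finset.card_le_card Finset.sdiff_subset).trans hA))
    _ = _ := by rw [hsign]; ring

theorem IsADk.comp_insert {F : Finset α → ℝ} {j : ℕ} (hF : IsADk F j) (x : α) :
    IsADk (fun T => F (insert x T)) j := fun A S hne hA => by
  rw [adDiff_comp_insert]
  exact hF A _ hne hA

theorem IsADk.isCMk_one_sub {p : Finset α → ℝ} {k : ℕ} (hp : IsADk p k) (hp1 : ∀ T, p T ≤ 1) :
    IsCMk (fun T => 1 - p T) k := by
  refine isCMk_iff.2 ⟨fun S => sub_nonneg.2 (hp1 S), fun A S hne hA => ?_⟩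
  have h : adDiff (fun T => -(1 - p T)) A S = adDiff p A S := by
    simp only [neg_sub, adDiff_sub, adDiff_const 1 hne, sub_zero]
  exact h ▸ hp A S hne hA

def marginal (x : α) (F : Finset α → ℝ) (T : Finset α) : ℝ :=
  F (insert x T) - F (T.erase x)

theorem ignores_marginal (x : α) (F : Finset α → ℝ) : Ignores (marginal x F) x := fun T => by
  simp only [marginal, Finset.insert_idem, Finset.erase_insert_eq_erase]

theorem adDiff_comp_erase {F : Finset α → ℝ} {x : α} {A S : Finset α} (hA : x ∉ A) (hS : x ∉ S) :
    adDiff (fun T => F (T.erase x)) A S = adDiff F A S :=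
  adDiff_congr_of_notMem (fun T hT => by rw [Finset.erase_eq_of_notMem hT]) hA hS

theorem IsADk.isCMk_marginal {F : Finset α → ℝ} {j : ℕ} (hF : IsADk F (j + 1)) (x : α) :
    IsCMk (marginal x F) j := by
  intro A S hA
  rw [(ignores_marginal x F).adDiff_eq]
  split_ifs with hxA
  · simp
  have hxS : x ∉ S.erase x := Finset.notMem_erase x S
  have h : adDiff (marginal x F) A (S.erase x) = adDiff F (insert x A) (S.erase x) := by
    unfold marginal
    rw [adDiff_sub, adDiff_comp_insert, adDiff_comp_erase hxA hxS,
      adDiff_insert _ hxA]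
  have hsign : (-1 : ℝ) ^ A.card = (-1) ^ ((insert x A).card + 1) := by
    rw [Finset.card_insert_of_notMem hxA]; ring
  rw [h, hsign]
  exact hF _ _ (Finset.insert_nonempty x A) (by rw [Finset.card_insert_of_notMem hxA]; omega)

def randomInsert (p : Finset α → ℝ) (x : α) (F : Finset α → ℝ) (T : Finset α) : ℝ :=
  (1 - p T) * F (T.erase x) + p T * F (insert x T)

theorem Ignores.randomInsert {p : Finset α → ℝ} {x : α} (hp : Ignores p x) (F : Finset α → ℝ) :
    Ignores (randomInsert p x F) x := fun T => by
  simp only [_root_.randomInsert, hp T, Finset.insert_idem, Finset.erase_insert_eq_erase]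

theorem adDiff_randomInsert (p : Finset α → ℝ) (F : Finset α → ℝ) {x : α} {A S : Finset α}
    (hA : x ∉ A) (hS : x ∉ S) :
    adDiff (randomInsert p x F) A S = ∑ B ∈ A.powerset,
      (adDiff (fun T => 1 - p T) B (S ∪ (A \ B)) * adDiff F (A \ B) S
        + adDiff p B (S ∪ (A \ B)) * adDiff F (A \ B) (insert x S)) := by
  unfold randomInsert
  rw [adDiff_add, adDiff_mul, adDiff_mul, ← Finset.sum_add_distrib]
  refine Finset.sum_congr rfl fun B _ => ?_
  rw [adDiff_comp_insert, adDiff_comp_erase (fun h => hA (Finset.mem_sdiff.1 h).1) hS]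

theorem IsADk.randomInsert {p F : Finset α → ℝ} {j k : ℕ} {x : α} (hp : IsADk p k)
    (hp0 : ∀ T, 0 ≤ p T) (hp1 : ∀ T, p T ≤ 1) (hpx : Ignores p x) (hF : IsADk F j)
    (hjk : j ≤ k) : IsADk (randomInsert p x F) j := by
  intro A S hne hA
  rw [(hpx.randomInsert F).adDiff_eq]
  split_ifs with hxA
  · simp
  set S' := S.erase x
  have hxS : x ∉ S' := Finset.notMem_erase x S
  rw [adDiff_randomInsert p F hxA hxS, Finset.mul_sum]
  refine Finset.sum_nonneg fun B hB => ?_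
  have hBA := Finset.mem_powerset.1 hB
  rcases B.eq_empty_or_nonempty with rfl | hBne
  · simp only [adDiff_empty, Finset.sdiff_empty]
    have h1 := hF A S' hne hA
    have h2 := hF A (insert x S') hne hA
    have := hp0 (S' ∪ A)
    have := hp1 (S' ∪ A)
    nlinarith
  have hxAB : x ∉ A \ B := fun h => hxA (Finset.mem_sdiff.1 h).1
  have hcard : (insert x (A \ B)).card + B.card = A.card + 1 := by
    rw [Finset.card_insert_of_notMem hxAB, add_right_comm, Finset.card_sdiff_add_card_eq_card hBA]
  have h : adDiff (fun T => 1 - p T) B (S' ∪ (A \ B)) * adDiff F (A \ B) S'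
      + adDiff p B (S' ∪ (A \ B)) * adDiff F (A \ B) (insert x S')
      = adDiff p B (S' ∪ (A \ B)) * adDiff F (insert x (A \ B)) S' := by
    rw [adDiff_sub, adDiff_const 1 hBne, adDiff_insert _ hxAB]
    ring
  have hsign : (-1 : ℝ) ^ (A.card + 1)
      = (-1) ^ (B.card + 1) * (-1) ^ ((insert x (A \ B)).card + 1) := by
    rw [← pow_add, ← hcard]; ring
  rw [h, hsign]
  calc (0 : ℝ) ≤ ((-1) ^ (B.card + 1) * adDiff p B (S' ∪ (A \ B)))
        * ((-1) ^ ((insert x (A \ B)).card + 1) * adDiff F (insert x (A \ B)) S') :=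
        mul_nonneg (hp _ _ hBne ((Finset.card_le_card hBA).trans (hA.trans hjk)))
          (hF _ _ (Finset.insert_nonempty _ _) (by have := Finset.card_pos.2 hBne; omega))
    _ = _ := by ring

theorem isADk_sum {ι : Type*} (s : Finset ι) {f : ι → Finset α → ℝ} {k : ℕ}
    (hf : ∀ i ∈ s, IsADk (f i) k) : IsADk (fun T => ∑ i ∈ s, f i T) k := fun A S hne hA => by
  rw [adDiff_sum, Finset.mul_sum]
  exact Finset.sum_nonneg fun i hi => hf i hi A S hne hA

theorem isADk_indicator (v : α) (k : ℕ) : IsADk (fun T => if v ∈ T then (1 : ℝ) else 0) k := by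
  intro A S hne _
  by_cases h : ∃ x ∈ A, x ≠ v
  · obtain ⟨x, hxA, hxv⟩ := h
    have hx : Ignores (fun T => if v ∈ T then (1 : ℝ) else 0) x := fun T => by
      simp only [Finset.mem_insert, hxv.symm, false_or]
    simp [hx.adDiff_eq, hxA]
  · obtain rfl : A = {v} := hne.subset_singleton_iff.1 fun x hx => by
      by_contra hxv; exact h ⟨x, hx, by simpa using hxv⟩
    rw [← insert_empty_eq, adDiff_insert _ (Finset.notMem_empty v), adDiff_empty, adDiff_empty]
    split_ifs <;> simp_all

end SetFunction

def GTInstance.mute (gt : GTInstance V) (t : V) : GTInstance V where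
  E := gt.E
  f v := if v = t then 0 else gt.f v
  f_nonneg v S := by split_ifs; exacts [le_rfl, gt.f_nonneg v S]
  f_le_one v S := by split_ifs; exacts [zero_le_one, gt.f_le_one v S]
  f_mono v := by split_ifs; exacts [monotone_const, gt.f_mono v]
  f_empty v := by split_ifs; exacts [rfl, gt.f_empty v]
  f_local v S := by split_ifs; exacts [rfl, gt.f_local v S]

@[simp] theorem GTInstance.mute_f_self (gt : GTInstance V) (t : V) : (gt.mute t).f t = 0 :=
  if_pos rfl

@[simp] theorem GTInstance.mute_f_of_ne (gt : GTInstance V) {t v : V} (h : v ≠ t) :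
    (gt.mute t).f v = gt.f v :=
  if_neg h

def GTInstance.live (gt : GTInstance V) : Finset V :=
  Finset.univ.filter fun v => gt.f v ≠ 0

theorem GTInstance.live_mute (gt : GTInstance V) (t : V) :
    (gt.mute t).live = gt.live.erase t := by
  ext v
  by_cases hv : v = t <;> simp [GTInstance.live, hv]

theorem GTInstance.ignores_of_not_edge (gt : GTInstance V) {t w : V} (h : ¬ gt.E t w) :
    Ignores (gt.f w) t := fun T => by
  rw [gt.f_local w, gt.f_local w T]
  congr 1
  ext v
  simp only [Finset.mem_filter, Finset.mem_insert, and_congr_left_iff, or_iff_right_iff_imp]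
  rintro hv rfl
  exact absurd hv h

section Cascade

variable (gt : GTInstance V) (θ : V → ℝ)

theorem monotone_cascade (S : Finset V) : Monotone (cascade gt θ S) :=
  monotone_nat_of_le_succ fun _ => Finset.subset_union_left

theorem cascade_card_succ (S : Finset V) :
    cascade gt θ S (Fintype.card V + 1) = finalSet gt θ S :=
  Finset.chain_succ_card_eq (monotone_cascade gt θ S) fun s h => by
    rw [cascade, h]
    exact h

theorem mem_finalSet_iff {S : Finset V} {v : V} :
    v ∈ finalSet gt θ S ↔ v ∈ S ∨ θ v ≤ gt.f v (finalSet gt θ S) := by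
  refine ⟨fun hv => ?_, ?_⟩
  · have key : ∀ s ≤ Fintype.card V, v ∈ cascade gt θ S s →
        v ∈ S ∨ θ v ≤ gt.f v (finalSet gt θ S) := by
      intro s
      induction s with
      | zero => exact fun _ => Or.inl
      | succ s ih =>
        intro hs hv
        rcases Finset.mem_union.1 hv with hv | hv
        · exact ih (by omega) hv
        · exact Or.inr (((Finset.mem_filter.1 hv).2).trans
            (gt.f_mono v (monotone_cascade gt θ S (by omega))))
    exact key _ le_rfl hv
  · rintro (hv | hv)
    · exact monotone_cascade gt θ S (Nat.zero_le _) hv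
    · rw [← cascade_card_succ, cascade]
      exact Finset.mem_union_right _ (by simpa [finalSet] using hv)

variable {gt θ}

theorem cascade_mute_of_mem {t : V} {S : Finset V} (ht : t ∈ S) (s : ℕ) :
    cascade (gt.mute t) θ S s = cascade gt θ S s := by
  induction s with
  | zero => rfl
  | succ s ih =>
    ext v
    by_cases hv : v = t
    · subst hv
      simp [cascade, ih, monotone_cascade gt θ S (Nat.zero_le s) ht]
    · simp [cascade, ih, hv]

theorem cascade_insert_of_ignores {t : V} (h : ∀ v ≠ t, Ignores (gt.f v) t) (X : Finset V)
    (s : ℕ) : cascade gt θ (insert t X) s = insert t (cascade gt θ X s) := by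
  induction s with
  | zero => rfl
  | succ s ih =>
    ext v
    by_cases hv : v = t
    · simp [cascade, ih, hv]
    · simp [cascade, ih, hv, h v hv _]

theorem notMem_cascade_mute {t : V} {X : Finset V} (hX : t ∉ X) (hθ : 0 < θ t) (s : ℕ) :
    t ∉ cascade (gt.mute t) θ X s := by
  induction s with
  | zero => exact hX
  | succ s ih => simp [cascade, ih, hθ]

theorem cascade_mute_update {t : V} {y : ℝ} (hθ : 0 < θ t) (hy : 0 < y) (X : Finset V)
    (s : ℕ) : cascade (gt.mute t) (Function.update θ t y) X s = cascade (gt.mute t) θ X s := by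
  induction s with
  | zero => rfl
  | succ s ih =>
    ext v
    by_cases hv : v = t
    · subst hv
      simp [cascade, ih, not_le.2 hθ, not_le.2 hy]
    · simp [cascade, ih, hv]

theorem erase_cascade {t : V} (h : ∀ v ≠ t, Ignores (gt.f v) t) {X : Finset V} (hX : t ∉ X)
    (hθ : 0 < θ t) (s : ℕ) : (cascade gt θ X s).erase t = cascade (gt.mute t) θ X s := by
  induction s with
  | zero => exact Finset.erase_eq_of_notMem hX
  | succ s ih =>
    ext v
    by_cases hv : v = t
    · subst hv
      simp [cascade, notMem_cascade_mute hX hθ, hθ]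
    · simp [cascade, ← ih, hv, (h v hv).erase]

theorem finalSet_insert_of_ignores {t : V} (h : ∀ v ≠ t, Ignores (gt.f v) t) (X : Finset V) :
    finalSet gt θ (insert t X) = insert t (finalSet (gt.mute t) θ X) := by
  rw [finalSet, ← cascade_mute_of_mem (Finset.mem_insert_self t X),
    cascade_insert_of_ignores (fun v hv => (gt.mute_f_of_ne hv).symm ▸ h v hv)]
  rfl

theorem finalSet_of_notMem {t : V} (h : ∀ v, Ignores (gt.f v) t) {X : Finset V} (hX : t ∉ X)
    (hθ : 0 < θ t) :
    finalSet gt θ X = if θ t ≤ gt.f t (finalSet (gt.mute t) θ X)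
      then insert t (finalSet (gt.mute t) θ X) else finalSet (gt.mute t) θ X := by
  have herase : (finalSet gt θ X).erase t = finalSet (gt.mute t) θ X :=
    erase_cascade (fun v _ => h v) hX hθ _
  have hmem : t ∈ finalSet gt θ X ↔ θ t ≤ gt.f t ((finalSet gt θ X).erase t) := by
    rw [mem_finalSet_iff, ← (h t).erase, or_iff_right hX]
  rw [← herase]
  split_ifs with hc
  · rw [Finset.insert_erase (hmem.2 hc)]
  · rw [Finset.erase_eq_of_notMem (mt hmem.1 hc)]

end Cascade

open ProbabilityTheory

instance : IsProbabilityMeasure (volume.restrict (Set.Icc (0 : ℝ) 1)) :=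
  ⟨by simp⟩

instance {ι : Type*} [Fintype ι] : IsProbabilityMeasure (cubeMeasure ι) := by
  unfold cubeMeasure
  infer_instance

theorem integral_Icc_ite_le {a : ℝ} (ha0 : 0 ≤ a) (ha1 : a ≤ 1) (p q : ℝ) :
    ∫ x in Set.Icc (0 : ℝ) 1, (if x ≤ a then p else q) = a * p + (1 - a) * q := by
  have h : (fun x : ℝ => if x ≤ a then p else q)
      = fun x => (Set.Iic a).indicator (fun _ => p - q) x + q := by
    funext x
    by_cases hx : x ≤ a <;> simp [Set.indicator, hx]
  rw [h, integral_add ((integrable_const _).indicator measurableSet_Iic) (integrable_const q),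
    integral_indicator_const _ measurableSet_Iic, integral_const,
    measureReal_restrict_apply measurableSet_Iic]
  have hIic : Set.Iic a ∩ Set.Icc 0 1 = Set.Icc 0 a := by
    ext x
    simp only [Set.mem_inter_iff, Set.mem_Iic, Set.mem_Icc]
    constructor
    · rintro ⟨hxa, hx0, -⟩; exact ⟨hx0, hxa⟩
    · rintro ⟨hx0, hxa⟩; exact ⟨hxa, hx0, hxa.trans ha1⟩
  rw [hIic, Real.volume_real_Icc, probReal_univ, smul_eq_mul, smul_eq_mul, sub_zero,
    max_eq_left ha0]
  ring

theorem integral_ite_le_of_indepFun {Ω β : Type*} [MeasurableSpace Ω] {μ : Measure Ω}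
    [IsProbabilityMeasure μ] [Fintype β] [MeasurableSpace β] [MeasurableSingletonClass β]
    {X : Ω → ℝ} {Y : Ω → β} (hX : Measurable X) (hY : Measurable Y) (hXY : IndepFun X Y μ)
    (hlaw : μ.map X = volume.restrict (Set.Icc 0 1)) {c : β → ℝ} (hc0 : ∀ b, 0 ≤ c b)
    (hc1 : ∀ b, c b ≤ 1) (u w : β → ℝ) :
    ∫ ω, (if X ω ≤ c (Y ω) then u (Y ω) else w (Y ω)) ∂μ
      = ∫ ω, (c (Y ω) * u (Y ω) + (1 - c (Y ω)) * w (Y ω)) ∂μ := by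
  set φ : ℝ × β → ℝ := fun p => if p.1 ≤ c p.2 then u p.2 else w p.2
  have hφ : Measurable φ := measurable_from_prod_countable_left fun b =>
    Measurable.ite (measurableSet_le measurable_id (measurable_const (a := c b)))
      (measurable_const (a := u b)) (measurable_const (a := w b))
  have hprod : μ.map (fun ω => (X ω, Y ω)) = (volume.restrict (Set.Icc 0 1)).prod (μ.map Y) := by
    rw [← hlaw]
    exact (indepFun_iff_map_prod_eq_prod_map_map hX.aemeasurable hY.aemeasurable).1 hXY
  have hφint : Integrable φ ((volume.restrict (Set.Icc 0 1)).prod (μ.map Y)) := by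
    refine Integrable.of_bound hφ.aestronglyMeasurable (∑ b, (|u b| + |w b|))
      (ae_of_all _ fun p => ?_)
    have hle := Finset.single_le_sum (f := fun b => |u b| + |w b|)
      (fun b _ => by positivity) (Finset.mem_univ p.2)
    simp only [φ, Real.norm_eq_abs]
    split_ifs <;> linarith [abs_nonneg (u p.2), abs_nonneg (w p.2)]
  calc ∫ ω, φ (X ω, Y ω) ∂μ
      = ∫ p, φ p ∂((volume.restrict (Set.Icc 0 1)).prod (μ.map Y)) := by
        rw [← hprod, integral_map (hX.prodMk hY).aemeasurable hφ.aestronglyMeasurable]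
    _ = ∫ b, (c b * u b + (1 - c b) * w b) ∂(μ.map Y) := by
        rw [integral_prod_symm φ hφint]
        exact integral_congr_ae <| ae_of_all _ fun b =>
          integral_Icc_ite_le (hc0 b) (hc1 b) (u b) (w b)
    _ = _ := integral_map hY.aemeasurable Measurable.of_discrete.aestronglyMeasurable

theorem measurable_cascade (gt : GTInstance V) (S : Finset V) (s : ℕ) :
    Measurable fun θ => cascade gt θ S s := by
  induction s with
  | zero => exact measurable_const
  | succ s ih =>
    refine measurable_finset_iff.2 fun v => ?_
    simp only [cascade, Finset.mem_union, Finset.mem_filter, Finset.mem_univ, true_and]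
    exact ((measurable_finset_mem v).comp ih).or
      (measurableSet_setOfPred.1 (measurableSet_le (measurable_pi_apply v)
        (Measurable.of_discrete.comp ih)))

theorem integrable_comp_finalSet (gt : GTInstance V) (F : Finset V → ℝ) (S : Finset V) :
    Integrable (fun θ => F (finalSet gt θ S)) (cubeMeasure V) :=
  Integrable.of_bound (Measurable.of_discrete.comp (measurable_cascade gt S _)).aestronglyMeasurable
    (∑ T, |F T|) (ae_of_all _ fun _ => Finset.single_le_sum (f := fun T => |F T|)
      (fun _ _ => abs_nonneg _) (Finset.mem_univ _))

theorem measurePreserving_eval_cubeMeasure {ι : Type*} [Fintype ι] (t : ι) :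
    MeasurePreserving (fun θ : ι → ℝ => θ t) (cubeMeasure ι) (volume.restrict (Set.Icc 0 1)) :=
  measurePreserving_eval _ t

theorem ae_pos_cubeMeasure {ι : Type*} [Fintype ι] (t : ι) : ∀ᵐ θ ∂cubeMeasure ι, 0 < θ t := by
  refine (measurePreserving_eval_cubeMeasure t).quasiMeasurePreserving.ae ?_
  filter_upwards [ae_restrict_mem measurableSet_Icc, ae_restrict_of_ae (Measure.ae_ne volume 0)]
    with x hx hx0
  exact lt_of_le_of_ne hx.1 hx0.symm

theorem indepFun_eval_update (t : V) (y : ℝ) :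
    IndepFun (fun θ : V → ℝ => θ t) (fun θ => Function.update θ t y) (cubeMeasure V) := by
  have h := (iIndepFun_pi (μ := fun _ : V => volume.restrict (Set.Icc (0 : ℝ) 1))
    (X := fun _ x => x) fun _ => aemeasurable_id).indepFun_finset {t} {t}ᶜ
    disjoint_compl_right fun _ => measurable_pi_apply _
  convert h.comp (φ := fun z => z ⟨t, Finset.mem_singleton_self t⟩)
    (ψ := fun z v => if hv : v ∈ ({t}ᶜ : Finset V) then z ⟨v, hv⟩ else y)
    (measurable_pi_apply (X := fun _ : ({t} : Finset V) => ℝ) ⟨t, Finset.mem_singleton_self t⟩)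
    (measurable_pi_lambda _ fun v => by
      by_cases hv : v ∈ ({t}ᶜ : Finset V)
      · simpa [hv] using measurable_pi_apply _
      · simp [hv]) using 1
  · rfl
  · ext θ v
    by_cases hv : v = t
    · subst hv; simp
    · simp [hv]
  · rfl

section Expectation

variable (gt : GTInstance V)

def finalExpectation (F : Finset V → ℝ) (S : Finset V) : ℝ :=
  ∫ θ, F (finalSet gt θ S) ∂cubeMeasure V

theorem finalExpectation_sub (F G : Finset V → ℝ) (S : Finset V) :
    finalExpectation gt (fun T => F T - G T) S
      = finalExpectation gt F S - finalExpectation gt G S :=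
  integral_sub (integrable_comp_finalSet gt F S) (integrable_comp_finalSet gt G S)

theorem finalExpectation_neg (F : Finset V → ℝ) (S : Finset V) :
    finalExpectation gt (fun T => -F T) S = -finalExpectation gt F S :=
  integral_neg _

theorem finalExpectation_nonneg {F : Finset V → ℝ} (hF : ∀ T, 0 ≤ F T) (S : Finset V) :
    0 ≤ finalExpectation gt F S :=
  integral_nonneg fun _ => hF _

theorem activationProb_eq_finalExpectation (v : V) (S : Finset V) :
    activationProb gt v S = finalExpectation gt (fun T => if v ∈ T then 1 else 0) S := by
  have hmeas : MeasurableSet {θ | v ∈ finalSet gt θ S} :=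
    measurableSet_setOfPred.2 ((measurable_finset_mem v).comp (measurable_cascade gt S _))
  change (cubeMeasure V).real _ = _
  rw [finalExpectation, ← integral_indicator_one hmeas]
  simp only [Set.indicator_apply, Set.mem_ofPred_eq, Pi.one_apply]

variable {gt}

theorem finalExpectation_insert {t : V} (h : ∀ v ≠ t, Ignores (gt.f v) t) (F : Finset V → ℝ)
    (X : Finset V) :
    finalExpectation gt F (insert t X)
      = finalExpectation (gt.mute t) (fun T => F (insert t T)) X := by
  simp only [finalExpectation, finalSet_insert_of_ignores h]

theorem finalExpectation_of_notMem {t : V} (h : ∀ v, Ignores (gt.f v) t) {X : Finset V}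
    (hX : t ∉ X) (F : Finset V → ℝ) :
    finalExpectation gt F X = finalExpectation (gt.mute t) (randomInsert (gt.f t) t F) X := by
  -- `Y` agrees a.e. with the muted final set and, unlike it, does not look at `θ t` at all.
  set Y : (V → ℝ) → Finset V := fun θ => finalSet (gt.mute t) (Function.update θ t 1) X
  have hYmeas : Measurable Y := (measurable_cascade _ _ _).comp measurable_update_left
  have hY : ∀ᵐ θ ∂cubeMeasure V, finalSet (gt.mute t) θ X = Y θ :=
    (ae_pos_cubeMeasure t).mono fun θ hθ => (cascade_mute_update hθ one_pos X _).symm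
  have htY : ∀ θ, t ∉ Y θ := fun θ => notMem_cascade_mute hX (by simp) _
  have hindep : IndepFun (fun θ => θ t) Y (cubeMeasure V) :=
    (indepFun_eval_update t 1).comp measurable_id (measurable_cascade _ _ _)
  calc finalExpectation gt F X
      = ∫ θ, (if θ t ≤ gt.f t (Y θ) then F (insert t (Y θ)) else F (Y θ)) ∂cubeMeasure V := by
        refine integral_congr_ae ?_
        filter_upwards [ae_pos_cubeMeasure t, hY] with θ hθ hYθ
        rw [finalSet_of_notMem h hX hθ, hYθ]
        split_ifs <;> rfl
    _ = ∫ θ, (gt.f t (Y θ) * F (insert t (Y θ)) + (1 - gt.f t (Y θ)) * F (Y θ)) ∂cubeMeasure V :=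
        integral_ite_le_of_indepFun (measurable_pi_apply t) hYmeas hindep
          (measurePreserving_eval_cubeMeasure t).map_eq (gt.f_nonneg t) (gt.f_le_one t)
          (fun T => F (insert t T)) F
    _ = _ := integral_congr_ae <| hY.mono fun θ hθ => by
        rw [hθ, randomInsert, Finset.erase_eq_of_notMem (htY θ)]
        ring

theorem adDiff_finalExpectation_of_mem {t : V} (h : ∀ v, Ignores (gt.f v) t)
    (F : Finset V → ℝ) {A S : Finset V} (htA : t ∈ A) (htS : t ∉ S) :
    adDiff (finalExpectation gt F) A S = adDiff (finalExpectation (gt.mute t)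
      fun T => (1 - gt.f t T) * marginal t F T) (A.erase t) S := by
  conv_lhs => rw [← Finset.insert_erase htA]
  rw [adDiff_insert _ (Finset.notMem_erase t A), ← adDiff_comp_insert]
  simp only [finalExpectation_insert (fun v _ => h v) F]
  rw [adDiff_congr_of_notMem (fun X hX => finalExpectation_of_notMem h hX F)
    (Finset.notMem_erase t A) htS, ← adDiff_sub]
  simp only [← finalExpectation_sub]
  congr! 3 with T
  simp only [randomInsert, marginal]
  ring

end Expectation

theorem isADk_finalExpectation_of_mute {gt : GTInstance V} {t : V} {k j : ℕ}
    (hign : ∀ v, Ignores (gt.f v) t) (ht : IsADk (gt.f t) k)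
    (ih : ∀ i ≤ k, ∀ G, IsADk G i → IsADk (finalExpectation (gt.mute t) G) i) (hjk : j ≤ k)
    {F : Finset V → ℝ} (hF : IsADk F j) : IsADk (finalExpectation gt F) j := by
  intro A S hne hA
  by_cases htS : t ∈ S
  · rw [← Finset.insert_erase htS, ← adDiff_comp_insert]
    simp only [finalExpectation_insert (fun v _ => hign v) F]
    exact ih j hjk _ (hF.comp_insert t) A _ hne hA
  by_cases htA : t ∉ A
  · rw [adDiff_congr_of_notMem (fun X hX => finalExpectation_of_notMem hign hX F) htA htS]
    exact ih j hjk _ (ht.randomInsert (gt.f_nonneg t) (gt.f_le_one t) (hign t) hF hjk) A S hne hA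
  rw [not_not] at htA
  obtain ⟨i, rfl⟩ : ∃ i, j = i + 1 := ⟨j - 1, by have := Finset.card_pos.2 ⟨t, htA⟩; omega⟩
  set W : Finset V → ℝ := fun T => (1 - gt.f t T) * marginal t F T
  have hW : IsCMk W i :=
    ((ht.isCMk_one_sub (gt.f_le_one t)).mono (by omega)).mul (hF.isCMk_marginal t)
  have hEW : IsCMk (finalExpectation (gt.mute t) W) i := by
    obtain ⟨hW0, hWad⟩ := isCMk_iff.1 hW
    refine isCMk_iff.2 ⟨finalExpectation_nonneg _ hW0, ?_⟩
    convert ih i (by omega) _ hWad using 1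
    exact funext fun S => (finalExpectation_neg _ W S).symm
  have hsign : (-1 : ℝ) ^ (A.card + 1) = (-1) ^ (A.erase t).card := by
    rw [← Finset.card_erase_add_one htA]; ring
  rw [adDiff_finalExpectation_of_mem hign F htA htS, hsign]
  exact hEW _ S (by rw [← Finset.card_erase_add_one htA] at hA; omega)

theorem finalExpectation_of_live_eq_empty {gt : GTInstance V} (h : gt.live = ∅)
    (F : Finset V → ℝ) (S : Finset V) : finalExpectation gt F S = F S := by
  have hf : ∀ v, gt.f v = 0 := by simpa [GTInstance.live, Finset.filter_eq_empty_iff] using h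
  have hfinal : ∀ᵐ θ ∂cubeMeasure V, finalSet gt θ S = S := by
    filter_upwards [ae_all_iff.2 ae_pos_cubeMeasure] with θ hθ
    suffices ∀ s, cascade gt θ S s = S from this _
    intro s
    induction s with
    | zero => rfl
    | succ s ih => simp [cascade, ih, hf, not_le.2 (hθ _)]
  rw [finalExpectation, integral_congr_ae (hfinal.mono fun θ hθ => by rw [hθ]), integral_const,
    probReal_univ, one_smul]

theorem isADk_finalExpectation {gt : GTInstance V} (hdag : IsDAG gt) {k : ℕ}
    (hloc : ∀ v, IsADk (gt.f v) k) {j : ℕ} (hjk : j ≤ k) {F : Finset V → ℝ} (hF : IsADk F j) :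
    IsADk (finalExpectation gt F) j := by
  induction hn : gt.live.card generalizing gt j F with
  | zero =>
    rw [funext (finalExpectation_of_live_eq_empty (Finset.card_eq_zero.1 hn) F)]
    exact hF
  | succ n ih =>
    obtain ⟨t, ht, hsink⟩ := Finset.exists_forall_not_rel hdag (s := gt.live)
      (Finset.card_pos.1 (by omega))
    have hign : ∀ v, Ignores (gt.f v) t := fun v => by
      by_cases hv : v ∈ gt.live
      · exact gt.ignores_of_not_edge (hsink v hv)
      · simp_all [GTInstance.live, Ignores]
    have hloc' : ∀ v, IsADk ((gt.mute t).f v) k := fun v => by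
      by_cases hv : v = t
      · subst hv
        simp [IsADk, adDiff]
      · simpa [hv] using hloc v
    exact isADk_finalExpectation_of_mute hign (hloc t)
      (fun i hik G hG => ih (gt := gt.mute t) hdag hloc' hik hG (by rw [GTInstance.live_mute,
        Finset.card_erase_of_mem ht, hn, Nat.add_sub_cancel])) hjk hF

/-- In the general threshold model on a directed acyclic graph, if every threshold
function is AD-`k` (locally AD-`k`), then the spread function `σ` is AD-`k`
(globally AD-`k`). -/
theorem dag_locally_ADk_implies_globally_ADk
    {V : Type*} [Fintype V] [DecidableEq V] (gt : GTInstance V)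
    (hdag : IsDAG gt) (k : ℕ) (hloc : ∀ v, IsADk (gt.f v) k) :
    IsADk (spread gt) k := by
  have h : spread gt = fun S => ∑ v, finalExpectation gt (fun T => if v ∈ T then 1 else 0) S :=
    funext fun S => Finset.sum_congr rfl fun v _ => activationProb_eq_finalExpectation gt v S
  rw [h]
  exact isADk_sum _ fun v _ => isADk_finalExpectation hdag hloc le_rfl (isADk_indicator v k)
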